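/- arXiv:2304.03389 — 6 statements merged into one kernel-verified Lean document; each statement's English description precedes it below -/
import Mathlib

section
/- If κ is a regular cardinal and L is a scattered linear order of cardinality κ, then either κ or its reverse order κ* embeds into L. -/
/-!
Call `x` and `y` κ-close when fewer than κ points lie between them; for infinite κ this is an
equivalence relation with convex classes (the κ-condensation). If the class of some `x` has κ
points, then so does its part above `x` or its part below `x`, and every element of that part has
fewer than κ predecessors (resp. successors) in it. By regularity, any fewer than κ of its
elements then have a strict upper (resp. lower) bound in it, so transfinite recursion yields a
strictly increasing (resp. decreasing) κ-sequence. Otherwise every class is small: there are at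
least two classes, and between two distinct classes lies a third, so a set of representatives is
a nontrivial dense order and contains a copy of ℚ.
-/

open Cardinal

def IsScattered (L : Type*) [LinearOrder L] : Prop :=
  ¬ ∃ f : ℚ → L, StrictMono f

universe u

open Set

section WellOrderedChains

variable {ι α : Type u} {κ : Cardinal.{u}}

theorem exists_strictMono_of_forall_exists_gt [Preorder ι] [WellFoundedLT ι] [Preorder α]
    (hι : ∀ i : ι, #(Iio i) < κ) (hα : ∀ s : Set α, #s < κ → ∃ b, ∀ x ∈ s, x < b) :
    ∃ f : ι → α, StrictMono f := by
  choose ub hub using hα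
  let f : ι → α := wellFounded_lt.fix fun i rec =>
    ub (range fun j : Iio i => rec j j.2) (mk_range_le.trans_lt (hι i))
  refine ⟨f, fun j i hji => ?_⟩
  have hf : f i = ub (range fun j : Iio i => f j) (mk_range_le.trans_lt (hι i)) :=
    wellFounded_lt.fix_eq _ i
  rw [hf]
  exact hub _ _ _ ⟨⟨j, hji⟩, rfl⟩

variable [LinearOrder α]

theorem exists_forall_lt_of_mk_Iic_lt (hκ : κ.IsRegular) (hα : κ ≤ #α)
    (hIic : ∀ x : α, #(Iic x) < κ) {s : Set α} (hs : #s < κ) : ∃ b, ∀ x ∈ s, x < b := by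
  have hunion : #(⋃ x ∈ s, Iic x) < κ :=
    (card_biUnion_lt_iff_forall_of_isRegular hκ hs).2 fun x _ => hIic x
  obtain ⟨b, hb⟩ : ∃ b, b ∉ ⋃ x ∈ s, Iic x := by
    by_contra! h
    rw [eq_univ_of_forall h, mk_univ] at hunion
    exact hunion.not_ge hα
  simp only [mem_iUnion, mem_Iic, not_exists, not_le] at hb
  exact ⟨b, hb⟩

theorem exists_strictMono_ord_toType_of_mk_Iic_lt (hκ : κ.IsRegular) (hα : κ ≤ #α)
    (hIic : ∀ x : α, #(Iic x) < κ) : ∃ f : κ.ord.ToType → α, StrictMono f :=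
  exists_strictMono_of_forall_exists_gt (fun i => by simpa using mk_Iio_lt i)
    fun _ hs => exists_forall_lt_of_mk_Iic_lt hκ hα hIic hs

theorem exists_strictAnti_ord_toType_of_mk_Ici_lt (hκ : κ.IsRegular) (hα : κ ≤ #α)
    (hIci : ∀ x : α, #(Ici x) < κ) : ∃ f : κ.ord.ToType → α, StrictAnti f :=
  exists_strictMono_ord_toType_of_mk_Iic_lt (α := αᵒᵈ) hκ hα hIci

end WellOrderedChains

section ConvexSetoid

variable {L : Type*} [LinearOrder L]

theorem exists_strictMono_rat_of_setoid (s : Setoid L)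
    (hconv : ∀ ⦃x y z⦄, y ∈ uIcc x z → s x z → s x y)
    (hdense : ∀ ⦃x y⦄, x < y → ¬ s x y → ∃ w ∈ Icc x y, ¬ s x w ∧ ¬ s w y)
    (hnt : ∃ x y, ¬ s x y) : ∃ f : ℚ → L, StrictMono f := by
  let rep : L → L := fun x => (Quotient.mk s x).out
  have rep_rel (x : L) : s (rep x) x := Quotient.mk_out x
  have rep_eq {x y : L} (h : s x y) : rep x = rep y := congrArg Quotient.out (Quotient.sound h)
  have not_rel_of_ne {x y : L} (h : rep x ≠ rep y) : ¬ s (rep x) (rep y) := fun hxy =>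
    h (by simpa only [rep_eq (rep_rel x), rep_eq (rep_rel y)] using rep_eq hxy)
  have : Nontrivial (range rep) := by
    obtain ⟨x, y, hxy⟩ := hnt
    refine ⟨⟨⟨rep x, x, rfl⟩, ⟨rep y, y, rfl⟩, fun h => hxy ?_⟩⟩
    have h' : rep x = rep y := congrArg Subtype.val h
    exact s.trans (s.symm (rep_rel x)) (h' ▸ rep_rel y)
  have : DenselyOrdered (range rep) := by
    refine ⟨?_⟩
    rintro ⟨_, x, rfl⟩ ⟨_, y, rfl⟩ hlt
    have hlt : rep x < rep y := hlt
    obtain ⟨w, hw, hxw, hwy⟩ := hdense hlt (not_rel_of_ne hlt.ne)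
    refine ⟨⟨rep w, w, rfl⟩, ?_, ?_⟩
    · by_contra! hle
      have hx : rep x ∈ uIcc (rep w) w := mem_uIcc_of_le hle hw.1
      exact hxw (s.trans (s.symm (hconv hx (rep_rel w))) (rep_rel w))
    · by_contra! hle
      have hy : rep y ∈ uIcc (rep w) w := mem_uIcc_of_ge hw.2 hle
      exact hwy (s.trans (s.symm (rep_rel w)) (hconv hy (rep_rel w)))
  obtain ⟨e⟩ := Order.embedding_from_countable_to_dense ℚ (range rep)
  exact ⟨fun q => e q, fun _ _ h => e.strictMono h⟩

end ConvexSetoid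

section Condensation

def condensation (L : Type u) [LinearOrder L] (κ : Cardinal.{u}) (hκ : ℵ₀ ≤ κ) : Setoid L where
  r x y := #(uIcc x y) < κ
  iseqv :=
    { refl x := by simpa using one_lt_aleph0.trans_le hκ
      symm {x y} h := by rwa [uIcc_comm]
      trans {x y z} hxy hyz :=
        (mk_le_mk_of_subset uIcc_subset_uIcc_union_uIcc).trans_lt
          ((mk_union_le _ _).trans_lt (add_lt_of_lt hκ hxy hyz)) }

variable {L : Type u} [LinearOrder L] {κ : Cardinal.{u}}

theorem condensation_of_mem_uIcc {hκ : ℵ₀ ≤ κ} {x y z : L} (hy : y ∈ uIcc x z)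
    (h : condensation L κ hκ x z) : condensation L κ hκ x y :=
  (mk_le_mk_of_subset (uIcc_subset_uIcc_left hy)).trans_lt h

theorem exists_not_condensation_between (hκ : ℵ₀ ≤ κ)
    (hsmall : ∀ x, #{y | condensation L κ hκ x y} < κ) {x y : L} (hxy : x < y)
    (h : ¬ condensation L κ hκ x y) :
    ∃ w ∈ Icc x y, ¬ condensation L κ hκ x w ∧ ¬ condensation L κ hκ w y := by
  by_contra! hall
  refine h ((mk_le_mk_of_subset fun w hw => ?_).trans_lt
    ((mk_union_le _ _).trans_lt (add_lt_of_lt hκ (hsmall x) (hsmall y))))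
  rw [uIcc_of_le hxy.le] at hw
  by_cases hxw : condensation L κ hκ x w
  · exact Or.inl hxw
  · exact Or.inr ((condensation L κ hκ).symm (hall w hw hxw))

theorem exists_not_condensation (hκ : ℵ₀ ≤ κ) (hL : κ ≤ #L)
    (hsmall : ∀ x, #{y | condensation L κ hκ x y} < κ) : ∃ x y, ¬ condensation L κ hκ x y := by
  obtain ⟨x⟩ : Nonempty L := mk_ne_zero_iff.1 (aleph0_pos.trans_le (hκ.trans hL)).ne'
  have hne : {y | condensation L κ hκ x y} ≠ Set.univ := fun h =>
    (hsmall x).not_ge (by rwa [h, mk_univ])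
  obtain ⟨y, hy⟩ := (ne_univ_iff_exists_notMem _).1 hne
  exact ⟨x, y, hy⟩

theorem exists_strictMono_rat_of_forall_mk_condensation_lt (hκ : ℵ₀ ≤ κ) (hL : κ ≤ #L)
    (hsmall : ∀ x, #{y | condensation L κ hκ x y} < κ) : ∃ f : ℚ → L, StrictMono f :=
  exists_strictMono_rat_of_setoid (condensation L κ hκ) (fun _ _ _ => condensation_of_mem_uIcc)
    (fun _ _ => exists_not_condensation_between hκ hsmall) (exists_not_condensation hκ hL hsmall)

theorem mk_Iic_le_mk_Icc_coe {s : Set L} {x : L} (hx : ∀ y ∈ s, x ≤ y) (a : s) :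
    #(Iic a) ≤ #(Icc x (a : L)) :=
  (mk_image_eq Subtype.val_injective).symm.trans_le
    (mk_le_mk_of_subset (by rintro _ ⟨w, hw, rfl⟩; exact ⟨hx _ w.2, hw⟩))

theorem mk_Ici_le_mk_Icc_coe {s : Set L} {x : L} (hx : ∀ y ∈ s, y ≤ x) (a : s) :
    #(Ici a) ≤ #(Icc (a : L) x) :=
  (mk_image_eq Subtype.val_injective).symm.trans_le
    (mk_le_mk_of_subset (by rintro _ ⟨w, hw, rfl⟩; exact ⟨hw, hx _ w.2⟩))

theorem exists_strictMono_or_strictAnti_of_le_mk_condensation (hκ : κ.IsRegular) (x : L)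
    (hx : κ ≤ #{y | condensation L κ hκ.aleph0_le x y}) :
    (∃ f : κ.ord.ToType → L, StrictMono f) ∨ ∃ f : κ.ord.ToType → L, StrictAnti f := by
  let up := {y | x ≤ y ∧ #(Icc x y) < κ}
  let down := {y | y ≤ x ∧ #(Icc y x) < κ}
  have hcover : {y | condensation L κ hκ.aleph0_le x y} ⊆ down ∪ up := by
    intro y (hy : #(uIcc x y) < κ)
    rcases le_total x y with h | h
    · exact Or.inr ⟨h, by rwa [uIcc_of_le h] at hy⟩
    · exact Or.inl ⟨h, by rwa [uIcc_of_ge h] at hy⟩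
  by_cases hup : κ ≤ #up
  · obtain ⟨f, hf⟩ := exists_strictMono_ord_toType_of_mk_Iic_lt hκ hup fun a =>
      (mk_Iic_le_mk_Icc_coe (fun _ hy => hy.1) a).trans_lt a.2.2
    exact Or.inl ⟨_, (Subtype.strictMono_coe _).comp hf⟩
  · have hdown : κ ≤ #down := by
      by_contra! hdown
      exact hx.not_gt ((mk_le_mk_of_subset hcover).trans_lt
        ((mk_union_le _ _).trans_lt (add_lt_of_lt hκ.aleph0_le hdown (not_le.1 hup))))
    obtain ⟨f, hf⟩ := exists_strictAnti_ord_toType_of_mk_Ici_lt hκ hdown fun a =>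
      (mk_Ici_le_mk_Icc_coe (fun _ hy => hy.1) a).trans_lt a.2.2
    exact Or.inr ⟨_, (Subtype.strictMono_coe _).comp_strictAnti hf⟩

end Condensation

/-- If `κ` is a regular cardinal and `L` is a scattered linear order of cardinality `κ`,
then either `κ` or its reverse `κ*` embeds into `L`. -/
theorem stmt0 (κ : Cardinal.{u}) (hreg : κ.IsRegular) (L : Type u) [LinearOrder L]
    (hcard : #L = κ) (hscat : IsScattered L) :
    (∃ f : κ.ord.ToType → L, StrictMono f) ∨ (∃ f : κ.ord.ToType → L, StrictAnti f) := by
  by_cases hbig : ∃ x : L, κ ≤ #{y | condensation L κ hreg.aleph0_le x y}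
  · obtain ⟨x, hx⟩ := hbig
    exact exists_strictMono_or_strictAnti_of_le_mk_condensation hreg x hx
  · push Not at hbig
    exact (hscat (exists_strictMono_rat_of_forall_mk_condensation_lt _ hcard.ge hbig)).elim
end

section
/- Let κ be an infinite cardinal and let L be a linear order of cardinality κ⁺ such that for every chain Z ⊆ L × L (in the coordinatewise partial order), the set of x ∈ L for which the section Z_x = {y ∈ L : (x,y) ∈ Z} has cardinality κ⁺ has cardinality at most κ. Then L² cannot be written as a union of κ many chains. -/
open Cardinal

/-- If `L` has cardinality `κ⁺` and every chain in `L × L` (coordinatewise order) has at most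
`κ` many sections of full cardinality `κ⁺`, then `L²` is not the union of `κ` many chains. -/
theorem stmt1 (κ : Cardinal.{u}) (hκ : ℵ₀ ≤ κ) (L : Type u) [LinearOrder L]
    (hcard : #L = Order.succ κ)
    (hsec : ∀ Z : Set (L × L), IsChain (· ≤ ·) Z →
      #{x : L | #{y : L | (x, y) ∈ Z} = Order.succ κ} ≤ κ) :
    ¬ ∃ 𝒵 : Set (Set (L × L)), #𝒵 ≤ κ ∧ (∀ Z ∈ 𝒵, IsChain (· ≤ ·) Z) ∧
        ⋃₀ 𝒵 = Set.univ := by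
  rintro ⟨𝒵, h1, h2, h3⟩
  -- the set of "bad" x (full section in some chain) has size ≤ κ
  set B : Set L := ⋃ Z ∈ 𝒵, {x : L | #{y : L | (x, y) ∈ Z} = Order.succ κ} with hBdef
  have hB : #B ≤ κ := by
    refine le_trans (mk_biUnion_le _ 𝒵) ?_
    have hsup : ⨆ Z : 𝒵, #({x : L | #{y : L | (x, y) ∈ Z.1} = Order.succ κ}) ≤ κ :=
      ciSup_le' fun Z => hsec Z.1 (h2 Z.1 Z.2)
    calc #𝒵 * ⨆ Z : 𝒵, #({x : L | #{y : L | (x, y) ∈ Z.1} = Order.succ κ})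
        ≤ κ * κ := mul_le_mul' h1 hsup
      _ = κ := mul_eq_self hκ
  -- B is not all of L
  have hBne : B ≠ Set.univ := by
    intro h
    rw [h, mk_univ, hcard] at hB
    exact absurd hB (not_le_of_gt (Order.lt_succ κ))
  obtain ⟨x, hx⟩ : ∃ x : L, x ∉ B := by
    by_contra h
    push_neg at h
    exact hBne (Set.eq_univ_of_forall h)
  -- the sections at x cover L
  have hcover : (Set.univ : Set L) ⊆ ⋃ Z ∈ 𝒵, {y : L | (x, y) ∈ Z} := by
    intro y _
    have : (x, y) ∈ ⋃₀ 𝒵 := h3 ▸ Set.mem_univ _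
    obtain ⟨Z, hZ, hxy⟩ := this
    exact Set.mem_biUnion hZ hxy
  -- each section has size ≤ κ
  have hsecsmall : ∀ Z ∈ 𝒵, #({y : L | (x, y) ∈ Z}) ≤ κ := by
    intro Z hZ
    have hne : #({y : L | (x, y) ∈ Z}) ≠ Order.succ κ := by
      intro h
      exact hx (Set.mem_biUnion hZ h)
    have hle : #({y : L | (x, y) ∈ Z}) ≤ Order.succ κ := hcard ▸ mk_set_le _
    exact Order.lt_succ_iff_of_not_isMax (not_isMax κ) |>.mp (lt_of_le_of_ne hle hne)
  -- so L has size ≤ κ, contradiction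
  have : #L ≤ κ := by
    have := Set.eq_univ_of_univ_subset hcover
    calc #L = #(⋃ Z ∈ 𝒵, {y : L | (x, y) ∈ Z}) := by rw [this, mk_univ]
      _ ≤ #𝒵 * ⨆ Z : 𝒵, #({y : L | (x, y) ∈ Z.1}) := mk_biUnion_le _ 𝒵
      _ ≤ κ * κ := mul_le_mul' h1 (ciSup_le' fun Z => hsecsmall Z.1 Z.2)
      _ = κ := mul_eq_self hκ
  rw [hcard] at this
  exact absurd this (not_le_of_gt (Order.lt_succ κ))
end

section
/- If C is a κ⁺-Countryman line, then C has no dense suborder of cardinality κ; i.e., no subset D ⊆ C of cardinality at most κ is dense in C. -/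
/-!
Suppose `D` is dense of size at most `κ`. As `C × C` is covered by `κ` chains and `κ⁺` is
regular, a single chain `Z` has infinite vertical fibers `{b | (a, b) ∈ Z}` over a set `A` of
`κ⁺` many points `a`. Picking `x_a < z_a` in the fiber over `a` with some `d_a ∈ D` strictly
between them, the chain condition gives `d_a < z_a ≤ x_b < d_b` whenever `a < b` in `A`, so
`a ↦ d_a` injects `A` into `D`.
-/

open Cardinal

/-- A linear order `C` is `κ⁺`-Countryman if it has cardinality `κ⁺` and `C × C`
(with the coordinatewise order) is the union of `κ` many chains. -/
def IsCountryman (κ : Cardinal.{u}) (C : Type u) [LinearOrder C] : Prop :=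
  #C = Order.succ κ ∧
    ∃ 𝒵 : Set (Set (C × C)), #𝒵 ≤ κ ∧ (∀ Z ∈ 𝒵, IsChain (· ≤ ·) Z) ∧ ⋃₀ 𝒵 = Set.univ

theorem Cardinal.exists_lt_mk_preimage_singleton {κ : Cardinal.{u}} (hκ : ℵ₀ ≤ κ)
    {α β : Type u} (f : β → α) (hα : #α ≤ κ) (hβ : κ < #β) : ∃ a, κ < #(f ⁻¹' {a}) := by
  simp_rw [← Order.succ_le_iff]
  refine infinite_pigeonhole_card f _ (Order.succ_le_of_lt hβ) (hκ.trans (Order.le_succ κ)) ?_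
  rw [(isRegular_succ hκ).cof_ord]
  exact hα.trans_lt (Order.lt_succ κ)

theorem Set.Infinite.exists_lt_lt {C : Type*} [LinearOrder C] {s : Set C} (hs : s.Infinite) :
    ∃ x ∈ s, ∃ y ∈ s, ∃ z ∈ s, x < y ∧ y < z := by
  obtain ⟨t, hts, ht⟩ := hs.exists_subset_card_eq 3
  let e := t.orderEmbOfFin ht
  have he : ∀ i, e i ∈ s := fun i => hts (t.orderEmbOfFin_mem ht i)
  exact ⟨e 0, he 0, e 1, he 1, e 2, he 2, e.strictMono (by decide), e.strictMono (by decide)⟩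

theorem IsChain.snd_le_of_fst_lt {C : Type*} [Preorder C] {Z : Set (C × C)}
    (hZ : IsChain (· ≤ ·) Z) {a b x y : C} (hax : (a, x) ∈ Z) (hby : (b, y) ∈ Z) (hab : a < b) :
    x ≤ y := by
  rcases hZ.total hax hby with h | h
  · exact h.2
  · exact absurd h.1 hab.not_ge

theorem Cardinal.mk_le_of_isChain_of_infinite_fibers {C : Type u} [LinearOrder C]
    {Z : Set (C × C)} (hZ : IsChain (· ≤ ·) Z) {D : Set C}
    (hD : ∀ a b : C, a < b → (∃ c, a < c ∧ c < b) → ∃ d ∈ D, a < d ∧ d < b)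
    {A : Set C} (hA : ∀ a ∈ A, {b | (a, b) ∈ Z}.Infinite) : #A ≤ #D := by
  have between : ∀ a : A, ∃ x z : C, (a.1, x) ∈ Z ∧ (a.1, z) ∈ Z ∧ ∃ d ∈ D, x < d ∧ d < z := by
    intro a
    obtain ⟨x, hx, y, -, z, hz, hxy, hyz⟩ := (hA a a.2).exists_lt_lt
    exact ⟨x, z, hx, hz, hD x z (hxy.trans hyz) ⟨y, hxy, hyz⟩⟩
  choose x z hx hz d hdD hxd hdz using between
  have hmono : StrictMono fun a : A => (⟨d a, hdD a⟩ : D) := fun a b hab =>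
    calc d a < z a := hdz a
      _ ≤ x b := hZ.snd_le_of_fst_lt (hz a) (hx b) hab
      _ < d b := hxd b
  exact mk_le_of_injective hmono.injective

/-- A `κ⁺`-Countryman line has no dense suborder of cardinality at most `κ`. -/
theorem stmt4 (κ : Cardinal.{u}) (hκ : ℵ₀ ≤ κ) (C : Type u) [LinearOrder C]
    (hC : IsCountryman κ C) :
    ¬ ∃ D : Set C, #D ≤ κ ∧
        ∀ a b : C, a < b → (∃ c, a < c ∧ c < b) → ∃ d ∈ D, a < d ∧ d < b := by
  rintro ⟨D, hDκ, hD⟩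
  obtain ⟨hCκ, 𝒵, h𝒵κ, hchain, hcover⟩ := hC
  have hκC : κ < #C := hCκ ▸ Order.lt_succ κ
  have hmem : ∀ p : C × C, ∃ Z : 𝒵, p ∈ Z.1 := fun p => by
    obtain ⟨Z, hZ, hp⟩ := Set.mem_sUnion.mp (hcover ▸ Set.mem_univ p)
    exact ⟨⟨Z, hZ⟩, hp⟩
  choose chainOf hchainOf using hmem
  have hfiber : ∀ a : C, ∃ Z : 𝒵, κ < #((fun b => chainOf (a, b)) ⁻¹' {Z}) := fun a =>
    exists_lt_mk_preimage_singleton hκ _ h𝒵κ hκC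
  choose bigChain hbigChain using hfiber
  obtain ⟨Z, hA⟩ := exists_lt_mk_preimage_singleton hκ bigChain h𝒵κ hκC
  have hAD : #(bigChain ⁻¹' {Z}) ≤ #D := by
    refine mk_le_of_isChain_of_infinite_fibers (hchain Z Z.2) hD fun a ha => ?_
    have hinf : ((fun b => chainOf (a, b)) ⁻¹' {bigChain a}).Infinite :=
      Set.infinite_coe_iff.mp (Cardinal.infinite_iff.mpr (hκ.trans (hbigChain a).le))
    refine hinf.mono fun b (hb : chainOf (a, b) = bigChain a) => ?_
    exact (hb.trans ha) ▸ hchainOf (a, b)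
  exact (hAD.trans hDκ).not_gt hA
end

section
/- Let s₀, t₀, s₁, t₁ be finite-to-one functions from successor ordinals into ω, with |s₀| = |s₁| < |t₀| = |t₁|, such that t₀ − t₁ and s₀ − s₁ are continuous ℤ-valued sequences (i.e., s₀ ≡ s₁ and t₀ ≡ t₁ are ρ₂-modifications of one another). Let r_i be the result of writing s_i over t_i, i.e., r_i(ξ) = s_i(ξ) for ξ < |s_i| and r_i(ξ) = t_i(ξ) for |s_i| ≤ ξ < |t_i|. Then r₀ − r₁ is a continuous ℤ-valued sequence (r₀ ≡ r₁). -/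
universe u

/-- A ℤ-valued sequence is continuous below `α` if at every limit ordinal `l < α` it is
eventually constant below `l` with value `m l`. -/
def ContinuousBelow (m : Ordinal.{u} → ℤ) (α : Ordinal.{u}) : Prop :=
  ∀ l < α, Order.IsSuccLimit l → ∃ β < l, ∀ ξ, β ≤ ξ → ξ ≤ l → m ξ = m l

/-- `f` is finite-to-one on its domain `α`. -/
def FinToOne (f : Ordinal.{u} → ℕ) (α : Ordinal.{u}) : Prop :=
  ∀ k : ℕ, {ξ : Ordinal.{u} | ξ < α ∧ f ξ = k}.Finite

/-- Since `a` is not a limit, a limit `l ≥ a` lies strictly above `a`, so near `l` only `m₁`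
is seen. -/
theorem ContinuousBelow.ite {m₀ m₁ : Ordinal.{u} → ℤ} {a b : Ordinal.{u}}
    (ha : ¬ Order.IsSuccLimit a) (h₀ : ContinuousBelow m₀ a) (h₁ : ContinuousBelow m₁ b) :
    ContinuousBelow (fun ξ => if ξ < a then m₀ ξ else m₁ ξ) b := by
  intro l hl hlim
  by_cases hla : l < a
  · obtain ⟨β, hβ, hconst⟩ := h₀ l hla hlim
    refine ⟨β, hβ, fun ξ hβξ hξl => ?_⟩
    dsimp only
    rw [if_pos (hξl.trans_lt hla), if_pos hla]
    exact hconst ξ hβξ hξl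
  · have hal : a < l := (not_lt.1 hla).lt_of_ne (by rintro rfl; exact ha hlim)
    obtain ⟨β, hβ, hconst⟩ := h₁ l hl hlim
    refine ⟨max β a, max_lt hβ hal, fun ξ hξ hξl => ?_⟩
    dsimp only
    rw [if_neg (not_lt.2 (le_of_max_le_right hξ)), if_neg hla]
    exact hconst ξ (le_of_max_le_left hξ) hξl

theorem stmt9_general (a b : Ordinal.{u}) (ha : ∃ a', a = a' + 1) (s₀ s₁ t₀ t₁ : Ordinal.{u} → ℕ)
    (hs : ContinuousBelow (fun ξ => (s₀ ξ : ℤ) - (s₁ ξ : ℤ)) a)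
    (ht : ContinuousBelow (fun ξ => (t₀ ξ : ℤ) - (t₁ ξ : ℤ)) b) :
    ContinuousBelow
      (fun ξ => ((if ξ < a then s₀ ξ else t₀ ξ : ℕ) : ℤ) -
        ((if ξ < a then s₁ ξ else t₁ ξ : ℕ) : ℤ)) b := by
  have hdiff : (fun ξ => ((if ξ < a then s₀ ξ else t₀ ξ : ℕ) : ℤ) -
      ((if ξ < a then s₁ ξ else t₁ ξ : ℕ) : ℤ)) =
      fun ξ => if ξ < a then (s₀ ξ : ℤ) - s₁ ξ else (t₀ ξ : ℤ) - t₁ ξ := by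
    funext ξ
    split_ifs <;> rfl
  rw [hdiff]
  obtain ⟨a', rfl⟩ := ha
  exact ContinuousBelow.ite (Order.not_isSuccLimit_add_one a') hs ht

/-- Writing equivalent sequences over equivalent sequences yields equivalent sequences:
if `s₀ ≡ s₁` (length `a`) and `t₀ ≡ t₁` (length `b > a`), then the results `rᵢ` of writing
`sᵢ` over `tᵢ` satisfy `r₀ ≡ r₁`. -/
theorem stmt9 (a b : Ordinal.{u}) (ha : ∃ a', a = a' + 1) (hb : ∃ b', b = b' + 1)
    (hab : a < b) (s₀ s₁ t₀ t₁ : Ordinal.{u} → ℕ)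
    (hs₀ : FinToOne s₀ a) (hs₁ : FinToOne s₁ a) (ht₀ : FinToOne t₀ b) (ht₁ : FinToOne t₁ b)
    (hs : ContinuousBelow (fun ξ => (s₀ ξ : ℤ) - (s₁ ξ : ℤ)) a)
    (ht : ContinuousBelow (fun ξ => (t₀ ξ : ℤ) - (t₁ ξ : ℤ)) b) :
    ContinuousBelow
      (fun ξ => ((if ξ < a then s₀ ξ else t₀ ξ : ℕ) : ℤ) -
        ((if ξ < a then s₁ ξ else t₁ ξ : ℕ) : ℤ)) b :=
  stmt9_general a b ha s₀ s₁ t₀ t₁ hs ht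
end

section
/- Let κ be an infinite cardinal, δ < κ⁺ a limit ordinal, and t : δ → ω an 𝕊_κ-limit, i.e., t↾(α+1) ∈ 𝕊_κ for all α < δ. Then t has an extension s ∈ 𝕊_κ with domain δ+1 if and only if liminf(t) is some finite n < ω and there exists α < δ such that the order type of {ξ ∈ (α, δ) : t(ξ) = n} is less than κ·ω. In particular, if cf(δ) > ω then such an extension always exists. -/
/-!
The value of an extension at the limit `δ` is forced by the limit clause to be the least `n`
for which `{ξ < δ | t ξ ≤ n}` is unbounded in `δ`, i.e. `liminf t`. All clauses below `δ` are
inherited from the restrictions `t ↾ (α + 1)`, and an interval reaching up to `δ` can be split at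
some `γ < δ`: the part up to `γ` is governed by `t ↾ (γ + 1)`, and since `κ·ω` is additively
indecomposable only the tail `{ξ ∈ (γ, δ) | t ξ = n}` matters. When `cf δ > ω` the values of
`t` cannot all have bounded preimages, and a tail of order type `≥ κ·ω` would already contain
one of type `κ·ω` below some `γ < δ`, contradicting the interval clause for `t ↾ (γ + 1)`.
-/

open Cardinal

universe u

/-- The order type of a set of ordinals (one universe up). -/
noncomputable def otp (s : Set Ordinal.{u}) : Ordinal.{u + 1} :=
  @Ordinal.type s (Subrel ((· < ·) : Ordinal.{u} → Ordinal.{u} → Prop) (· ∈ s)) inferInstance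

/-- `C` is unbounded in (cofinal below) `x`. -/
def UnbddBelow (C : Set Ordinal.{u}) (x : Ordinal.{u}) : Prop :=
  ∀ β < x, ∃ α ∈ C, β < α ∧ α < x

/-- The set `Cₙᵗ = {α < l : t α ≤ n}`. -/
def Ct (t : Ordinal.{u} → ℕ) (l : Ordinal.{u}) (n : ℕ) : Set Ordinal.{u} :=
  {α | α < l ∧ t α ≤ n}

/-- Membership in `𝕊_κ`: `t` has domain a successor ordinal `l < κ⁺`, each `Cₙᵗ` is
closed, at limit ordinals `t` takes the least value `n` with `Cₙᵗ` unbounded below, and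
every interval disjoint from `Cₙ₋₁ᵗ` meets `Cₙᵗ` in a set of order type `< κ·ω`. -/
def InSkappa (κ : Cardinal.{u}) (l : Ordinal.{u}) (t : Ordinal.{u} → ℕ) : Prop :=
  (∃ δ, l = δ + 1) ∧ l < (Order.succ κ).ord ∧
  (∀ n : ℕ, ∀ x < l, Order.IsSuccLimit x → UnbddBelow (Ct t l n) x → t x ≤ n) ∧
  (∀ x < l, Order.IsSuccLimit x →
    UnbddBelow (Ct t l (t x)) x ∧ ∀ m : ℕ, UnbddBelow (Ct t l m) x → t x ≤ m) ∧
  (∀ n : ℕ, ∀ I : Set Ordinal.{u}, I ⊆ Set.Iio l → I.OrdConnected →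
    (∀ x ∈ I, n ≤ t x) →
    otp (Ct t l n ∩ I) < Ordinal.lift.{u + 1} (κ.ord * Ordinal.omega0))

open Ordinal Set Order

section OrderType

theorem otp_mono {A B : Set Ordinal.{u}} (h : A ⊆ B) : otp A ≤ otp B :=
  type_le_iff'.2 ⟨(OrderEmbedding.ofStrictMono (inclusion h) fun _ _ hab => hab).ltEmbedding⟩

theorem otp_Iio (o : Ordinal.{u}) : otp (Iio o) = lift.{u + 1} o :=
  type_lt_Iio o

theorem otp_empty : otp (∅ : Set Ordinal.{u}) = 0 :=
  type_eq_zero_iff_isEmpty.2 (isEmpty_coe_sort.2 rfl)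

theorem otp_singleton (a : Ordinal.{u}) : otp {a} = 1 :=
  type_eq_one_iff_unique.2 ⟨uniqueSingleton a⟩

theorem otp_union_le {A B : Set Ordinal.{u}} (h : ∀ a ∈ A, ∀ b ∈ B, a < b) :
    otp (A ∪ B) ≤ otp A + otp B := by
  classical
  rw [otp, otp, otp, ← type_sum_lex]
  refine type_le_iff'.2 ⟨RelEmbedding.ofMonotone
    (fun x => if hx : x.1 ∈ A then .inl ⟨x.1, hx⟩ else .inr ⟨x.1, x.2.resolve_left hx⟩) ?_⟩
  intro x y (hxy : x.1 < y.1)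
  by_cases hx : x.1 ∈ A <;> by_cases hy : y.1 ∈ A <;> simp only [hx, hy, dite_true, dite_false]
  · exact Sum.Lex.inl hxy
  · exact Sum.Lex.sep _ _
  · exact absurd hxy (h _ hy _ (x.2.resolve_left hx)).asymm
  · exact Sum.Lex.inr hxy

theorem otp_le_otp_inter_Iic_add_otp_inter_Ioi (A : Set Ordinal.{u}) (γ : Ordinal.{u}) :
    otp A ≤ otp (A ∩ Iic γ) + otp (A ∩ Ioi γ) := by
  calc otp A = otp (A ∩ Iic γ ∪ A ∩ Ioi γ) := by
        rw [← inter_union_distrib_left, Iic_union_Ioi, inter_univ]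
    _ ≤ _ := otp_union_le fun a ha b hb => ha.2.trans_lt hb.2

end OrderType

section MulOmega

theorem isPrincipal_add_lift_mul_omega0 (a : Ordinal.{u}) :
    IsPrincipal (· + ·) (lift.{u + 1} (a * ω)) := by
  rw [Ordinal.lift_mul, lift_omega0]
  exact isPrincipal_add_mul_of_isPrincipal_add _ one_lt_omega0.ne' isPrincipal_add_omega0

theorem one_lt_lift_mul_omega0 {a : Ordinal.{u}} (ha : 0 < a) : 1 < lift.{u + 1} (a * ω) := by
  rw [← Ordinal.lift_one.{u, u + 1}, Ordinal.lift_lt]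
  exact one_lt_omega0.trans_le (le_mul_right _ ha)

/-- `a * ω` has cofinality `ω < cf δ`, so an initial segment of `S` of type `a * ω` would be
bounded below `δ`. -/
theorem otp_lt_lift_mul_omega0_of_forall_Iic {a δ : Ordinal.{u}} (hδ : ℵ₀ < δ.cof)
    {S : Set Ordinal.{u}} (hS : S ⊆ Iio δ)
    (h : ∀ γ < δ, otp (S ∩ Iic γ) < lift.{u + 1} (a * ω)) :
    otp S < lift.{u + 1} (a * ω) := by
  by_contra! hle
  rw [← otp_Iio, otp, otp, type_le_iff'] at hle
  obtain ⟨f⟩ := hle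
  have hδ0 : 0 < δ := pos_of_ne_zero fun h0 => by simp [h0] at hδ
  have ha : 0 < a := pos_of_ne_zero fun ha => by simpa [ha] using h 0 hδ0
  have hk : ∀ k : ℕ, a * k < a * ω := fun k => (mul_lt_mul_iff_right₀ ha).2 (natCast_lt_omega0 k)
  set γ := ⨆ k : ℕ, (f ⟨a * k, hk k⟩ : Ordinal.{u})
  have hγ : γ < δ := lift_iSup_lt_of_lt_cof (by simpa using hδ) fun k => hS (f _).2
  refine (h γ hγ).not_ge ?_
  rw [← otp_Iio, otp, otp, type_le_iff']
  refine ⟨RelEmbedding.ofMonotone (fun i => ⟨f i, (f i).2, ?_⟩) fun i j hij => f.map_rel_iff.2 hij⟩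
  obtain ⟨_, hc, hic⟩ := (lt_mul_iff_of_isSuccLimit isSuccLimit_omega0).1 i.2
  obtain ⟨k, rfl⟩ := lt_omega0.1 hc
  exact (f.map_rel_iff.2 (show i < ⟨a * k, hk k⟩ from hic)).le.trans
    (Ordinal.le_iSup (fun k : ℕ => (f ⟨a * k, hk k⟩ : Ordinal.{u})) k)

end MulOmega

section Unbounded

variable {A B : Set Ordinal.{u}} {x δ : Ordinal.{u}} {t : Ordinal.{u} → ℕ}

theorem unbddBelow_congr (h : ∀ ξ < x, ξ ∈ A ↔ ξ ∈ B) : UnbddBelow A x ↔ UnbddBelow B x :=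
  forall₂_congr fun _ _ => exists_congr fun ξ =>
    ⟨fun ⟨hA, hlt, hξ⟩ => ⟨(h ξ hξ).1 hA, hlt, hξ⟩, fun ⟨hB, hlt, hξ⟩ => ⟨(h ξ hξ).2 hB, hlt, hξ⟩⟩

theorem UnbddBelow.mono (hAB : A ⊆ B) (h : UnbddBelow A x) : UnbddBelow B x :=
  fun β hβ => (h β hβ).imp fun _ ⟨hξ, hlt⟩ => ⟨hAB hξ, hlt⟩

theorem not_unbddBelow_iff : ¬ UnbddBelow A x ↔ ∃ β < x, ∀ ξ ∈ A, ξ < x → ξ ≤ β := by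
  simp only [UnbddBelow, not_forall, not_exists, not_and, not_lt, exists_prop]
  refine exists_congr fun β => and_congr_right fun _ => forall₂_congr fun ξ _ => ?_
  constructor <;> intro h h' <;> contrapose! h' <;> exact h h'

theorem unbddBelow_union_iff : UnbddBelow (A ∪ B) x ↔ UnbddBelow A x ∨ UnbddBelow B x := by
  refine ⟨fun h => ?_, ?_⟩
  · by_contra! hAB
    obtain ⟨⟨β₁, hβ₁, hA⟩, ⟨β₂, hβ₂, hB⟩⟩ := And.imp not_unbddBelow_iff.1 not_unbddBelow_iff.1 hAB
    obtain ⟨ξ, hξ, hlt, hξx⟩ := h _ (max_lt hβ₁ hβ₂)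
    rcases hξ with hξ | hξ
    · exact (hA ξ hξ hξx).not_gt (le_max_left _ _ |>.trans_lt hlt)
    · exact (hB ξ hξ hξx).not_gt (le_max_right _ _ |>.trans_lt hlt)
  · rintro (h | h)
    exacts [h.mono subset_union_left, h.mono subset_union_right]

theorem unbddBelow_Ct_iff (l : Ordinal.{u}) (m : ℕ) :
    UnbddBelow (Ct t l m) x ↔ ∃ k ≤ m, UnbddBelow {ξ | ξ < l ∧ t ξ = k} x := by
  induction m with
  | zero => simp [Ct]
  | succ m ih =>
    have hsplit : Ct t l (m + 1) = Ct t l m ∪ {ξ | ξ < l ∧ t ξ = m + 1} := by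
      ext ξ; simp only [Ct, mem_ofPred_eq, mem_union, Nat.le_succ_iff]; tauto
    rw [hsplit, unbddBelow_union_iff, ih]
    simp [Nat.le_succ_iff, or_and_right, exists_or]

theorem isLeast_unbddBelow_Ct_iff {l : Ordinal.{u}} {n : ℕ} :
    IsLeast {m | UnbddBelow (Ct t l m) x} n ↔
      UnbddBelow {ξ | ξ < l ∧ t ξ = n} x ∧ ∀ m < n, ¬ UnbddBelow {ξ | ξ < l ∧ t ξ = m} x := by
  simp only [IsLeast, lowerBounds, mem_ofPred_eq, unbddBelow_Ct_iff]
  refine ⟨fun ⟨⟨k, hkn, hk⟩, hmin⟩ => ?_, fun ⟨hn, hmin⟩ => ⟨⟨n, le_rfl, hn⟩, ?_⟩⟩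
  · have hmin' : ∀ m < n, ¬ UnbddBelow {ξ | ξ < l ∧ t ξ = m} x :=
      fun m hm hU => (hmin ⟨m, le_rfl, hU⟩).not_gt hm
    obtain rfl : k = n := hkn.antisymm (not_lt.1 fun hk' => hmin' k hk' hk)
    exact ⟨hk, hmin'⟩
  · rintro m ⟨k, hkm, hk⟩
    exact (not_lt.1 fun hkn => hmin k hkn hk).trans hkm

theorem exists_forall_mem_Ioo_le_of_mem_lowerBounds (hδ : 0 < δ) {n : ℕ}
    (hn : n ∈ lowerBounds {m | UnbddBelow (Ct t δ m) δ}) : ∃ β < δ, ∀ ξ ∈ Ioo β δ, n ≤ t ξ := by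
  cases n with
  | zero => exact ⟨0, hδ, fun _ _ => Nat.zero_le _⟩
  | succ n =>
    obtain ⟨β, hβ, hle⟩ := not_unbddBelow_iff.1 fun hU => (hn hU).not_gt (Nat.lt_succ_self n)
    exact ⟨β, hβ, fun ξ hξ => not_lt.1 fun htξ =>
      (hle ξ ⟨hξ.2, Nat.le_of_lt_succ htξ⟩ hξ.2).not_gt hξ.1⟩

theorem exists_unbddBelow_Ct_of_aleph0_lt_cof (hδ : ℵ₀ < δ.cof) :
    ∃ m, UnbddBelow (Ct t δ m) δ := by
  by_contra! h
  choose β hβ hle using fun m => not_unbddBelow_iff.1 (h m)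
  set ξ := ⨆ m, β m + 1
  have hξ : ξ < δ := lift_iSup_add_one_lt_of_lt_cof (by simpa using hδ) hβ
  exact (hle (t ξ) ξ ⟨hξ, le_rfl⟩ hξ).not_gt
    ((lt_add_one _).trans_le (Ordinal.le_iSup (fun m => β m + 1) (t ξ)))

end Unbounded

section Skappa

variable {κ : Cardinal.{u}} {δ : Ordinal.{u}} {s t : Ordinal.{u} → ℕ}

theorem InSkappa.isLeast {l x : Ordinal.{u}} (h : InSkappa κ l t) (hx : x < l)
    (hlim : IsSuccLimit x) : IsLeast {m | UnbddBelow (Ct t l m) x} (t x) :=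
  ⟨(h.2.2.2.1 x hx hlim).1, fun _ hm => (h.2.2.2.1 x hx hlim).2 _ hm⟩

theorem setOf_unbddBelow_Ct_congr {l l' x : Ordinal.{u}} (hl : x ≤ l) (hl' : x ≤ l')
    (hst : ∀ ξ < x, s ξ = t ξ) :
    {m | UnbddBelow (Ct s l m) x} = {m | UnbddBelow (Ct t l' m) x} :=
  ext fun _ => unbddBelow_congr fun ξ hξ => by
    simp [Ct, hξ.trans_le hl, hξ.trans_le hl', hst ξ hξ]

theorem inSkappa_add_one_of_isLeast (hκ : ℵ₀ ≤ κ) (hδ : δ < (succ κ).ord)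
    (ht : ∀ α < δ, InSkappa κ (α + 1) t) (hst : ∀ ξ < δ, s ξ = t ξ)
    (hleast : IsLeast {m | UnbddBelow (Ct s (δ + 1) m) δ} (s δ))
    (htail : ∀ (m : ℕ) (I : Set Ordinal.{u}), I.OrdConnected → (∀ x ∈ I, m ≤ s x) →
      ∃ γ < δ, otp (Ct s (δ + 1) m ∩ I ∩ Ioi γ) < lift.{u + 1} (κ.ord * ω)) :
    InSkappa κ (δ + 1) s := by
  have hlimit : ∀ x < δ + 1, IsSuccLimit x →
      IsLeast {m | UnbddBelow (Ct s (δ + 1) m) x} (s x) := by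
    intro x hx hlim
    rcases (lt_add_one_iff.1 hx).lt_or_eq with hxδ | rfl
    · rw [hst x hxδ, setOf_unbddBelow_Ct_congr hx.le (lt_add_one x).le
        fun ξ hξ => hst ξ (hξ.trans hxδ)]
      exact (ht x hxδ).isLeast (lt_add_one x) hlim
    · exact hleast
  refine ⟨⟨δ, rfl⟩, ?_, fun m x hx hlim hm => (hlimit x hx hlim).2 hm,
    fun x hx hlim => ⟨(hlimit x hx hlim).1, fun m hm => (hlimit x hx hlim).2 hm⟩, ?_⟩
  · rw [← succ_eq_add_one]
    exact (Cardinal.isSuccLimit_ord (hκ.trans (le_succ κ))).succ_lt hδ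
  · intro m I _ hI hm
    obtain ⟨γ, hγ, hγtail⟩ := htail m I hI hm
    refine (otp_le_otp_inter_Iic_add_otp_inter_Ioi _ γ).trans_lt
      (isPrincipal_add_lift_mul_omega0 _ ?_ hγtail)
    have hrestrict : Ct s (δ + 1) m ∩ I ∩ Iic γ = Ct t (γ + 1) m ∩ (I ∩ Iic γ) := by
      ext ξ
      by_cases hξ : ξ ≤ γ
      · have hξδ := hξ.trans_lt hγ
        simp [Ct, hξ, hst ξ hξδ, lt_add_one_iff, hξδ.le, and_comm]
      · simp [hξ]
    rw [hrestrict]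
    exact (ht γ hγ).2.2.2.2 m _ (fun x hx => mem_Iio.2 (lt_add_one_iff.2 hx.2))
      (hI.inter ordConnected_Iic) fun x hx => hst x (hx.2.trans_lt hγ) ▸ hm x hx.1

theorem isLeast_and_otp_tail_lt_of_inSkappa (hlim : IsSuccLimit δ)
    (hst : ∀ ξ < δ, s ξ = t ξ) (hs : InSkappa κ (δ + 1) s) :
    IsLeast {m | UnbddBelow (Ct t δ m) δ} (s δ) ∧
      ∃ α < δ, otp {ξ | α < ξ ∧ ξ < δ ∧ t ξ = s δ} < lift.{u + 1} (κ.ord * ω) := by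
  have hleast : IsLeast {m | UnbddBelow (Ct t δ m) δ} (s δ) := by
    rw [← setOf_unbddBelow_Ct_congr (lt_add_one δ).le le_rfl hst]
    exact hs.isLeast (lt_add_one δ) hlim
  obtain ⟨β, hβ, hle⟩ := exists_forall_mem_Ioo_le_of_mem_lowerBounds hlim.pos hleast.2
  refine ⟨hleast, β, hβ, ?_⟩
  have htail : {ξ | β < ξ ∧ ξ < δ ∧ t ξ = s δ} = Ct s (δ + 1) (s δ) ∩ Ioo β δ := by
    ext ξ
    constructor
    · rintro ⟨hβξ, hξδ, htξ⟩
      exact ⟨⟨hξδ.trans (lt_add_one δ), (hst ξ hξδ).le.trans htξ.le⟩, hβξ, hξδ⟩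
    · rintro ⟨⟨-, hsξ⟩, hβξ, hξδ⟩
      exact ⟨hβξ, hξδ, (hst ξ hξδ ▸ hsξ).antisymm (hle ξ ⟨hβξ, hξδ⟩)⟩
  rw [htail]
  exact hs.2.2.2.2 _ _ (fun x hx => hx.2.trans (lt_add_one δ)) ordConnected_Ioo
    fun x hx => hst x hx.2 ▸ hle x hx

theorem exists_lt_disjoint_Ioc_of_unbddBelow {I A : Set Ordinal.{u}} (hI : I.OrdConnected)
    (hδ : 0 < δ) (hA : UnbddBelow A δ) (hIA : Disjoint I A) (hδI : δ ∉ I) :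
    ∃ γ < δ, Disjoint I (Ioc γ δ) := by
  by_cases h : ∃ x ∈ I, x < δ
  · obtain ⟨x, hxI, hxδ⟩ := h
    obtain ⟨ξ, hξA, hxξ, hξδ⟩ := hA x hxδ
    exact ⟨ξ, hξδ, disjoint_left.2 fun y hyI hy =>
      disjoint_left.1 hIA (hI.out hxI hyI ⟨hxξ.le, hy.1.le⟩) hξA⟩
  · push Not at h
    exact ⟨0, hδ, disjoint_left.2 fun y hyI hy => hδI ((h y hyI).antisymm hy.2 ▸ hyI)⟩

theorem exists_inSkappa_extension (hκ : ℵ₀ ≤ κ) (hδ : δ < (succ κ).ord) (hlim : IsSuccLimit δ)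
    (ht : ∀ α < δ, InSkappa κ (α + 1) t) {n : ℕ} (hn : IsLeast {m | UnbddBelow (Ct t δ m) δ} n)
    {α : Ordinal.{u}} (hα : α < δ)
    (htail : otp {ξ | α < ξ ∧ ξ < δ ∧ t ξ = n} < lift.{u + 1} (κ.ord * ω)) :
    ∃ s : Ordinal.{u} → ℕ, (∀ ξ < δ, s ξ = t ξ) ∧ InSkappa κ (δ + 1) s := by
  set s := Function.update t δ n
  have hst : ∀ ξ < δ, s ξ = t ξ := fun ξ hξ => Function.update_of_ne hξ.ne _ _
  have hsδ : s δ = n := Function.update_self _ _ _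
  obtain ⟨β, hβ, hle⟩ := exists_forall_mem_Ioo_le_of_mem_lowerBounds hlim.pos hn.2
  have hle' : ∀ ξ ∈ Ioc β δ, n ≤ s ξ := fun ξ hξ => by
    rcases hξ.2.lt_or_eq with hξδ | rfl
    exacts [hst ξ hξδ ▸ hle ξ ⟨hξ.1, hξδ⟩, hsδ.ge]
  have hL : 1 < lift.{u + 1} (κ.ord * ω) :=
    one_lt_lift_mul_omega0 (Cardinal.ord_pos.2 (aleph0_pos.trans_le hκ))
  refine ⟨s, hst, inSkappa_add_one_of_isLeast hκ hδ ht hst ?_ fun m I hI hm => ?_⟩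
  · rwa [hsδ, setOf_unbddBelow_Ct_congr (lt_add_one δ).le le_rfl hst]
  rcases lt_trichotomy m n with hmn | rfl | hnm
  · have hempty : Ct s (δ + 1) m ∩ I ∩ Ioi β = ∅ :=
      eq_empty_of_forall_notMem fun ξ ⟨⟨⟨hξ, hsξ⟩, _⟩, hβξ⟩ =>
        (hsξ.trans_lt hmn).not_ge (hle' ξ ⟨hβξ, lt_add_one_iff.1 hξ⟩)
    exact ⟨β, hβ, hempty ▸ otp_empty ▸ zero_lt_one.trans hL⟩
  · refine ⟨α, hα, ?_⟩
    calc otp (Ct s (δ + 1) m ∩ I ∩ Ioi α)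
        ≤ otp ({ξ | α < ξ ∧ ξ < δ ∧ t ξ = m} ∪ {δ}) := by
          refine otp_mono fun ξ ⟨⟨⟨hξ, hsξ⟩, hξI⟩, hαξ⟩ => ?_
          rcases (lt_add_one_iff.1 hξ).lt_or_eq with hξδ | rfl
          exacts [.inl ⟨hαξ, hξδ, hst ξ hξδ ▸ hsξ.antisymm (hm ξ hξI)⟩, .inr rfl]
      _ ≤ otp {ξ | α < ξ ∧ ξ < δ ∧ t ξ = m} + otp {δ} :=
          otp_union_le fun _ ha _ hb => hb ▸ ha.2.1
      _ < lift.{u + 1} (κ.ord * ω) :=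
          isPrincipal_add_lift_mul_omega0 _ htail (otp_singleton δ ▸ hL)
  · have hIA : Disjoint I {ξ | ξ < δ ∧ t ξ = n} := disjoint_left.2 fun ξ hξI ⟨hξδ, htξ⟩ =>
      (hm ξ hξI).not_gt (hst ξ hξδ ▸ htξ ▸ hnm)
    obtain ⟨γ, hγ, hγI⟩ := exists_lt_disjoint_Ioc_of_unbddBelow hI hlim.pos
      (isLeast_unbddBelow_Ct_iff.1 hn).1 hIA fun hδI => (hm δ hδI).not_gt (hsδ ▸ hnm)
    have hempty : Ct s (δ + 1) m ∩ I ∩ Ioi γ = ∅ :=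
      eq_empty_of_forall_notMem fun ξ ⟨⟨⟨hξ, _⟩, hξI⟩, hγξ⟩ =>
        disjoint_left.1 hγI hξI ⟨hγξ, lt_add_one_iff.1 hξ⟩
    exact ⟨γ, hγ, hempty ▸ otp_empty ▸ zero_lt_one.trans hL⟩

theorem exists_isLeast_and_otp_tail_lt_of_aleph0_lt_cof (hcof : ℵ₀ < δ.cof)
    (ht : ∀ α < δ, InSkappa κ (α + 1) t) :
    ∃ n, IsLeast {m | UnbddBelow (Ct t δ m) δ} n ∧
      ∃ α < δ, otp {ξ | α < ξ ∧ ξ < δ ∧ t ξ = n} < lift.{u + 1} (κ.ord * ω) := by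
  obtain ⟨n, hn⟩ : ∃ n, IsLeast {m | UnbddBelow (Ct t δ m) δ} n :=
    ⟨_, isLeast_csInf (exists_unbddBelow_Ct_of_aleph0_lt_cof hcof)⟩
  have hδ : 0 < δ := pos_of_ne_zero fun h0 => by simp [h0] at hcof
  obtain ⟨β, hβ, hle⟩ := exists_forall_mem_Ioo_le_of_mem_lowerBounds hδ hn.2
  refine ⟨n, hn, β, hβ,
    otp_lt_lift_mul_omega0_of_forall_Iic hcof (fun ξ hξ => hξ.2.1) fun γ hγ => ?_⟩
  calc otp ({ξ | β < ξ ∧ ξ < δ ∧ t ξ = n} ∩ Iic γ) ≤ otp (Ct t (γ + 1) n ∩ Ioc β γ) :=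
        otp_mono fun ξ ⟨⟨hβξ, _, htξ⟩, hξγ⟩ => ⟨⟨lt_add_one_iff.2 hξγ, htξ.le⟩, hβξ, hξγ⟩
    _ < lift.{u + 1} (κ.ord * ω) :=
        (ht γ hγ).2.2.2.2 n _ (fun x hx => mem_Iio.2 (lt_add_one_iff.2 hx.2)) ordConnected_Ioc
          fun x hx => hle x ⟨hx.1, hx.2.trans_lt hγ⟩

end Skappa

/-- An `𝕊_κ`-limit `t` of limit length `δ` extends to an element of `𝕊_κ` of length
`δ + 1` iff its limit infimum is some finite `n` whose preimage has a tail of order type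
less than `κ·ω`. In particular such an extension exists whenever `cf(δ) > ω`. -/
theorem stmt13 (κ : Cardinal.{u}) (hκ : ℵ₀ ≤ κ) (δ : Ordinal.{u})
    (hδ : δ < (Order.succ κ).ord) (hlim : Order.IsSuccLimit δ) (t : Ordinal.{u} → ℕ)
    (ht : ∀ α < δ, InSkappa κ (α + 1) t) :
    ((∃ s : Ordinal.{u} → ℕ, (∀ ξ < δ, s ξ = t ξ) ∧ InSkappa κ (δ + 1) s) ↔
      ∃ n : ℕ,
        (UnbddBelow {ξ | ξ < δ ∧ t ξ = n} δ ∧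
          ∀ m < n, ¬ UnbddBelow {ξ | ξ < δ ∧ t ξ = m} δ) ∧
        ∃ α < δ, otp {ξ | α < ξ ∧ ξ < δ ∧ t ξ = n} <
          Ordinal.lift.{u + 1} (κ.ord * Ordinal.omega0)) ∧
    (ℵ₀ < δ.cof →
      ∃ s : Ordinal.{u} → ℕ, (∀ ξ < δ, s ξ = t ξ) ∧ InSkappa κ (δ + 1) s) := by
  have hext : (∃ s : Ordinal.{u} → ℕ, (∀ ξ < δ, s ξ = t ξ) ∧ InSkappa κ (δ + 1) s) ↔
      ∃ n, IsLeast {m | UnbddBelow (Ct t δ m) δ} n ∧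
        ∃ α < δ, otp {ξ | α < ξ ∧ ξ < δ ∧ t ξ = n} < lift.{u + 1} (κ.ord * ω) :=
    ⟨fun ⟨s, hst, hs⟩ => ⟨s δ, isLeast_and_otp_tail_lt_of_inSkappa hlim hst hs⟩,
      fun ⟨_, hn, _, hα, htail⟩ => exists_inSkappa_extension hκ hδ hlim ht hn hα htail⟩
  simp only [← isLeast_unbddBelow_Ct_iff]
  exact ⟨hext, fun hcof => hext.2 (exists_isLeast_and_otp_tail_lt_of_aleph0_lt_cof hcof ht)⟩
end

section
/- Let κ be an infinite cardinal. For every t ∈ 𝕊_κ, otp(C^t_n) < (κ·ω)^{n+1} for every n < ω, and the map t ↦ (last(t), otp(C^t_{last(t)})) is a specializing function: if s ⊊ t in 𝕊_κ (s is a proper initial segment of t) then they receive different values. Consequently 𝕊_κ, ordered by extension, is the union of κ many antichains. -/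
open Cardinal

universe u

abbrev srel (s : Set Ordinal.{u}) := Subrel ((· < ·) : Ordinal.{u} → Ordinal.{u} → Prop) (· ∈ s)

lemma otp_le_of_subset {s t : Set Ordinal.{u}} (h : s ⊆ t) : otp s ≤ otp t :=
  (RelEmbedding.ofMonotone (r := srel s) (s := srel t)
    (fun x => ⟨x.1, h x.2⟩) (fun _ _ hab => hab)).ordinal_type_le

lemma otp_lt_of_subset {s t : Set Ordinal.{u}} {a : Ordinal.{u}} (h : s ⊆ t) (ha : a ∈ t)
    (hlt : ∀ x ∈ s, x < a) : otp s < otp t := by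
  have h1 : otp s ≤ Ordinal.typein (srel t) ⟨a, ha⟩ := by
    rw [← Ordinal.type_subrel]
    exact (RelEmbedding.ofMonotone (r := srel s)
      (s := Subrel (srel t) (srel t · ⟨a, ha⟩))
      (fun x => ⟨⟨x.1, h x.2⟩, hlt x.1 x.2⟩)
      (fun _ _ hab => hab)).ordinal_type_le
  exact h1.trans_lt (Ordinal.typein_lt_type _ _)

lemma otp_le_of_mono {s : Set Ordinal.{u}} {c : Ordinal.{u+1}} (g : Ordinal.{u} → Ordinal.{u+1})
    (hb : ∀ x ∈ s, g x < c) (hm : ∀ x ∈ s, ∀ y ∈ s, x < y → g x < g y) : otp s ≤ c := by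
  rw [← Ordinal.type_toType c]
  haveI : IsWellOrder c.ToType (· < ·) := isWellOrder_lt
  exact (RelEmbedding.ofMonotone (r := srel s)
    (s := ((· < ·) : c.ToType → c.ToType → Prop))
    (fun x => (Ordinal.ToType.mk (o := c)) ⟨g x, hb x.1 x.2⟩)
    (fun a b hab => ((Ordinal.ToType.mk (o := c))).lt_iff_lt.2
      (Subtype.mk_lt_mk.2 (hm a.1 a.2 b.1 b.2 hab)))).ordinal_type_le

lemma skappa_bound (κ : Cardinal.{u}) (hκ : ℵ₀ ≤ κ) (l : Ordinal.{u}) (t : Ordinal.{u} → ℕ)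
    (ht : InSkappa κ l t) (n : ℕ) :
    otp (Ct t l n) < (Ordinal.lift.{u+1} (κ.ord * Ordinal.omega0)) ^ (n + 1) := by
  set μ := Ordinal.lift.{u+1} (κ.ord * Ordinal.omega0) with hμdef
  obtain ⟨-, -, -, -, hI⟩ := ht
  have hord0 : (0 : Ordinal.{u}) < κ.ord :=
    lt_of_lt_of_le Ordinal.omega0_pos (by rw [← Cardinal.ord_aleph0]; exact Cardinal.ord_le_ord.2 hκ)
  have hμ0 : (0:Ordinal.{u}) < κ.ord * Ordinal.omega0 :=
    mul_pos hord0 Ordinal.omega0_pos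
  have hμpos : 0 < μ := by rw [hμdef]; simpa using (Ordinal.lift_lt.{u+1}).2 hμ0
  have hμlim : Order.IsSuccLimit μ :=
    Ordinal.isSuccLimit_lift.2 (Ordinal.isSuccLimit_mul_right hord0 Ordinal.isSuccLimit_omega0)
  have hpowlim : ∀ m : ℕ, Order.IsSuccLimit (μ ^ (m+1)) := by
    intro m
    induction m with
    | zero => rw [pow_one]; exact hμlim
    | succ m ih => rw [pow_succ]; exact Ordinal.isSuccLimit_mul_right ih.pos hμlim
  induction n with
  | zero =>
    have h0 := hI 0 (Set.Iio l) le_rfl Set.ordConnected_Iio (fun x _ => Nat.zero_le _)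
    have heq : Ct t l 0 ∩ Set.Iio l = Ct t l 0 :=
      Set.inter_eq_self_of_subset_left fun x hx => hx.1
    rw [heq] at h0
    rw [pow_one]
    exact h0
  | succ n ih =>
    set C := Ct t l n with hC
    set D := Ct t l (n + 1) with hD
    set a : Ordinal.{u} → Ordinal.{u+1} := fun x => otp (C ∩ Set.Iic x) with ha
    set J : Ordinal.{u} → Set Ordinal.{u} :=
      fun x => {z | z ≤ x ∧ Set.Icc z x ∩ C = ∅} ∩ Set.Iio l with hJ
    set b : Ordinal.{u} → Ordinal.{u+1} := fun x => otp (D ∩ J x) with hb'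
    set g : Ordinal.{u} → Ordinal.{u+1} := fun x => μ * a x + b x with hg
    have hbb : ∀ x, b x < μ := by
      intro x
      have hconn : (J x).OrdConnected := by
        apply Set.OrdConnected.inter _ Set.ordConnected_Iio
        constructor
        intro z1 hz1 z2 hz2 y hy
        refine ⟨hy.2.trans hz2.1, Set.eq_empty_of_subset_empty ?_⟩
        rw [← hz1.2]
        exact Set.inter_subset_inter_left C (Set.Icc_subset_Icc_left hy.1)
      have hval : ∀ y ∈ J x, n + 1 ≤ t y := by
        intro y hy
        by_contra hc
        have hyC : y ∈ Set.Icc y x ∩ C := ⟨⟨le_rfl, hy.1.1⟩, hy.2, by omega⟩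
        rw [hy.1.2] at hyC
        exact hyC
      exact hI (n+1) (J x) Set.inter_subset_right hconn hval
    have haC : ∀ x, a x ≤ otp C := fun x => otp_le_of_subset Set.inter_subset_left
    have hgb : ∀ x ∈ D, g x < μ * (otp C + 1) := by
      intro x _
      calc μ * a x + b x < μ * a x + μ := add_lt_add_right (hbb x) _
        _ = μ * (a x + 1) := by rw [mul_add, mul_one]
        _ ≤ μ * (otp C + 1) := mul_le_mul_right (add_le_add_left (haC x) 1) μ
    have hgm : ∀ x ∈ D, ∀ y ∈ D, x < y → g x < g y := by
      intro x hx y hy hxy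
      by_cases hz : ∃ z ∈ C, x < z ∧ z ≤ y
      · obtain ⟨z, hzC, hxz, hzy⟩ := hz
        have haxy : a x < a y := otp_lt_of_subset
          (Set.inter_subset_inter_right C (Set.Iic_subset_Iic.2 hxy.le))
          ⟨hzC, hzy⟩ (fun w hw => lt_of_le_of_lt hw.2 hxz)
        calc μ * a x + b x < μ * a x + μ := add_lt_add_right (hbb x) _
          _ = μ * (a x + 1) := by rw [mul_add, mul_one]
          _ ≤ μ * a y := mul_le_mul_right (by
              rw [Ordinal.add_one_eq_succ]; exact Order.succ_le_of_lt haxy) μ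
          _ ≤ μ * a y + b y := le_self_add
      · have hae : C ∩ Set.Iic x = C ∩ Set.Iic y := by
          apply Set.Subset.antisymm
            (Set.inter_subset_inter_right C (Set.Iic_subset_Iic.2 hxy.le))
          rintro w ⟨hwC, hwy⟩
          refine ⟨hwC, ?_⟩
          by_contra hw
          exact hz ⟨w, hwC, lt_of_not_ge hw, hwy⟩
        have hyC : y ∉ C := fun h => hz ⟨y, h, hxy, le_rfl⟩
        have hbxy : b x < b y := by
          apply otp_lt_of_subset (a := y)
          · rintro w ⟨hwD, ⟨hwx, hwIcc⟩, hwl⟩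
            refine ⟨hwD, ⟨hwx.trans hxy.le, ?_⟩, hwl⟩
            rw [Set.eq_empty_iff_forall_notMem]
            rintro v ⟨⟨hwv, hvy⟩, hvC⟩
            rcases le_or_gt v x with h | h
            · have : v ∈ Set.Icc w x ∩ C := ⟨⟨hwv, h⟩, hvC⟩
              rw [hwIcc] at this
              exact this
            · exact hz ⟨v, hvC, h, hvy⟩
          · refine ⟨hy, ⟨le_rfl, ?_⟩, hy.1⟩
            rw [Set.Icc_self, Set.eq_empty_iff_forall_notMem]
            rintro v ⟨hv1, hv2⟩
            rw [Set.mem_singleton_iff] at hv1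
            subst hv1
            exact hyC hv2
          · rintro w ⟨-, ⟨hwx, -⟩, -⟩
            exact lt_of_le_of_lt hwx hxy
        have hax : a x = a y := by rw [ha]; simp only []; rw [hae]
        calc μ * a x + b x = μ * a y + b x := by rw [hax]
          _ < μ * a y + b y := add_lt_add_right hbxy _
    have hle : otp D ≤ μ * (otp C + 1) := otp_le_of_mono g hgb hgm
    have hC1 : otp C + 1 < μ ^ (n+1) := by
      rw [Ordinal.add_one_eq_succ]
      exact (hpowlim n).succ_lt ih
    calc otp D ≤ μ * (otp C + 1) := hle
      _ < μ * μ ^ (n+1) := mul_lt_mul_of_pos_left hC1 hμpos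
      _ = μ ^ (n+1+1) := (pow_succ' μ (n+1)).symm

lemma skappa_spec (κ : Cardinal.{u}) (l l' : Ordinal.{u}) (t t' : Ordinal.{u} → ℕ)
    (ht : InSkappa κ l t) (ht' : InSkappa κ l' t') (hll : l < l')
    (hag : ∀ ξ < l, t ξ = t' ξ) :
    (t (Ordinal.pred l), otp (Ct t l (t (Ordinal.pred l)))) ≠
      (t' (Ordinal.pred l'), otp (Ct t' l' (t' (Ordinal.pred l')))) := by
  obtain ⟨δ, rfl⟩ := ht.1
  obtain ⟨δ', rfl⟩ := ht'.1
  have hp : Ordinal.pred (δ + 1) = δ := by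
    rw [Ordinal.add_one_eq_succ, Ordinal.pred_succ]
  have hp' : Ordinal.pred (δ' + 1) = δ' := by
    rw [Ordinal.add_one_eq_succ, Ordinal.pred_succ]
  rw [hp, hp']
  intro heq
  have h1 : t δ = t' δ' := congrArg Prod.fst heq
  have h2 : otp (Ct t (δ+1) (t δ)) = otp (Ct t' (δ'+1) (t' δ')) := congrArg Prod.snd heq
  have hδδ' : δ + 1 ≤ δ' := by
    rw [Ordinal.add_one_eq_succ, Ordinal.add_one_eq_succ] at hll
    rw [Ordinal.add_one_eq_succ]
    exact Order.lt_succ_iff.1 hll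
  have hlt : otp (Ct t (δ+1) (t δ)) < otp (Ct t' (δ'+1) (t' δ')) := by
    apply otp_lt_of_subset (a := δ')
    · rintro α ⟨hαl, hα⟩
      exact ⟨hαl.trans hll, by rw [← hag α hαl]; omega⟩
    · refine ⟨?_, by omega⟩
      rw [Ordinal.add_one_eq_succ]
      exact Order.lt_succ δ'
    · rintro α ⟨hαl, -⟩
      exact lt_of_lt_of_le hαl hδδ'
  exact hlt.ne h2

lemma lift_pow' (x : Ordinal.{u}) (n : ℕ) :
    Ordinal.lift.{u+1} (x ^ n) = (Ordinal.lift.{u+1} x) ^ n := by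
  induction n with
  | zero => simp
  | succ n ih => rw [pow_succ, pow_succ, Ordinal.lift_mul, ih]

/-- For every `t ∈ 𝕊_κ`, `otp(Cₙᵗ) < (κ·ω)^(n+1)`; the map
`t ↦ (last t, otp(Cᵗ_{last t}))` is a specializing function (proper initial segments get
different values); consequently `𝕊_κ`, ordered by extension, is the union of `κ` many
antichains (witnessed by a function into a set of size `κ` injective on chains). -/
theorem stmt18 (κ : Cardinal.{u}) (hκ : ℵ₀ ≤ κ) :
    (∀ (l : Ordinal.{u}) (t : Ordinal.{u} → ℕ), InSkappa κ l t → ∀ n : ℕ,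
      otp (Ct t l n) < Ordinal.lift.{u + 1} ((κ.ord * Ordinal.omega0) ^ (n + 1))) ∧
    (∀ (l l' : Ordinal.{u}) (t t' : Ordinal.{u} → ℕ),
      InSkappa κ l t → InSkappa κ l' t' → l < l' → (∀ ξ < l, t ξ = t' ξ) →
      (t (Ordinal.pred l), otp (Ct t l (t (Ordinal.pred l)))) ≠
        (t' (Ordinal.pred l'), otp (Ct t' l' (t' (Ordinal.pred l'))))) ∧
    ∃ F : Ordinal.{u} × (Ordinal.{u} → ℕ) → ℕ × κ.ord.ToType,
      ∀ p q : Ordinal.{u} × (Ordinal.{u} → ℕ),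
        InSkappa κ p.1 p.2 → InSkappa κ q.1 q.2 → p.1 < q.1 →
        (∀ ξ < p.1, p.2 ξ = q.2 ξ) → F p ≠ F q := by
  have hbound : ∀ (l : Ordinal.{u}) (t : Ordinal.{u} → ℕ), InSkappa κ l t → ∀ n : ℕ,
      otp (Ct t l n) < Ordinal.lift.{u + 1} ((κ.ord * Ordinal.omega0) ^ (n + 1)) := by
    intro l t ht n
    rw [lift_pow']
    exact skappa_bound κ hκ l t ht n
  refine ⟨hbound, fun l l' t t' ht ht' h1 h2 => skappa_spec κ l l' t t' ht ht' h1 h2, ?_⟩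
  classical
  -- part 3
  set c : ℕ → Ordinal.{u} := fun n => (κ.ord * Ordinal.omega0) ^ (n + 1) with hc
  have hcard : ∀ n : ℕ, (c n).card ≤ κ := by
    have hbase : (κ.ord * Ordinal.omega0).card = κ := by
      rw [Ordinal.card_mul, Cardinal.card_ord, Ordinal.card_omega0, Cardinal.mul_aleph0_eq hκ]
    intro n
    induction n with
    | zero => rw [hc]; simpa [pow_one] using hbase.le
    | succ n ih =>
      rw [hc]
      simp only []
      rw [pow_succ, Ordinal.card_mul, hbase]
      calc (c n).card * κ ≤ κ * κ := mul_le_mul' ih le_rfl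
        _ = κ := Cardinal.mul_eq_self hκ
  have hemb : ∀ n : ℕ, ∃ f : Set.Iio (c n) ↪ Set.Iio κ.ord, True := by
    intro n
    have h1 : #(Set.Iio (c n)) ≤ #(Set.Iio κ.ord) := by
      rw [Ordinal.mk_Iio_ordinal, Ordinal.mk_Iio_ordinal, Cardinal.lift_le, Cardinal.card_ord]
      exact hcard n
    obtain ⟨f⟩ := (Cardinal.le_def _ _).1 h1
    exact ⟨f, trivial⟩
  choose f _ using hemb
  have hne : Nonempty κ.ord.ToType := by
    apply Ordinal.toType_nonempty_iff_ne_zero.2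
    have : (0 : Ordinal.{u}) < κ.ord :=
      lt_of_lt_of_le Ordinal.omega0_pos
        (by rw [← Cardinal.ord_aleph0]; exact Cardinal.ord_le_ord.2 hκ)
    exact this.ne'
  set e : ℕ → Ordinal.{u+1} → κ.ord.ToType := fun n o =>
    if h : ∃ o' : Ordinal.{u}, Ordinal.lift.{u+1} o' = o ∧ o' < c n
    then (Ordinal.ToType.mk (o := κ.ord)) (f n ⟨h.choose, h.choose_spec.2⟩)
    else hne.some with he
  have heinj : ∀ (n : ℕ) (o₁ o₂ : Ordinal.{u+1}),
      o₁ < Ordinal.lift.{u+1} (c n) → o₂ < Ordinal.lift.{u+1} (c n) →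
      e n o₁ = e n o₂ → o₁ = o₂ := by
    intro n o₁ o₂ h1 h2 hee
    have e1 : ∃ o' : Ordinal.{u}, Ordinal.lift.{u+1} o' = o₁ ∧ o' < c n := by
      obtain ⟨o', rfl⟩ := Ordinal.mem_range_lift_of_le h1.le
      exact ⟨o', rfl, Ordinal.lift_lt.1 h1⟩
    have e2 : ∃ o' : Ordinal.{u}, Ordinal.lift.{u+1} o' = o₂ ∧ o' < c n := by
      obtain ⟨o', rfl⟩ := Ordinal.mem_range_lift_of_le h2.le
      exact ⟨o', rfl, Ordinal.lift_lt.1 h2⟩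
    rw [he] at hee
    simp only [dif_pos e1, dif_pos e2] at hee
    have h3 := (f n).injective (((Ordinal.ToType.mk (o := κ.ord))).injective hee)
    have h4 : e1.choose = e2.choose := congrArg Subtype.val h3
    rw [← e1.choose_spec.1, ← e2.choose_spec.1, h4]
  refine ⟨fun p => (p.2 (Ordinal.pred p.1),
    e (p.2 (Ordinal.pred p.1)) (otp (Ct p.2 p.1 (p.2 (Ordinal.pred p.1))))), ?_⟩
  intro p q hp hq hpq hag hFeq
  have h1 : p.2 (Ordinal.pred p.1) = q.2 (Ordinal.pred q.1) := congrArg Prod.fst hFeq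
  set n := p.2 (Ordinal.pred p.1) with hn
  have h2 : e n (otp (Ct p.2 p.1 n)) = e n (otp (Ct q.2 q.1 (q.2 (Ordinal.pred q.1)))) := by
    have := congrArg Prod.snd hFeq
    simpa [← h1] using this
  have hb1 : otp (Ct p.2 p.1 n) < Ordinal.lift.{u+1} (c n) := hbound p.1 p.2 hp n
  have hb2 : otp (Ct q.2 q.1 (q.2 (Ordinal.pred q.1))) < Ordinal.lift.{u+1} (c n) := by
    rw [← h1] at *
    exact hbound q.1 q.2 hq n
  have h3 := heinj n _ _ hb1 hb2 h2
  exact skappa_spec κ p.1 q.1 p.2 q.2 hp hq hpq hag (by simp only [Prod.mk.injEq]; exact ⟨h1, h3⟩)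
end
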